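/- Let L be the Laplacian of a weighted directed graph on N nodes and let D = diag(ι_1,...,ι_N) with ι_i ∈ {0,1} and at least one ι_i = 1. If every node of the graph is reachable by a directed path from the set {i : ι_i = 1}, then every eigenvalue of the expanded Laplacian L̄ = L + D has strictly positive real part; in particular L̄ is invertible. -/

import Mathlib

/-!
Let `v ≠ 0` satisfy `(L + D) v = μ v` with `Re μ ≤ 0`, and let `p` be a node where `‖v p‖` is
maximal. Row `p` reads `∑ j, a p j (v p - v j) = (μ - ι p) v p`; multiplying by `conj (v p)` and
using `‖v j‖ ≤ ‖v p‖` gives `∑ j, a p j ‖v j - v p‖² ≤ 2 (Re μ - ι p) ‖v p‖² ≤ 0`. Hence `v` takes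
the value `v p` at every in-neighbour of `p`, which is again a maximal node, and `ι p ≤ Re μ`.
Following a path backwards from `p` to a root `c` gives `0 < ι c ≤ Re μ`, a contradiction.
-/

open Matrix Complex ComplexConjugate

lemma Complex.normSq_sub_le_two_mul_re_conj_mul_sub {z w : ℂ} (h : ‖z‖ ≤ ‖w‖) :
    normSq (z - w) ≤ 2 * (conj w * (w - z)).re := by
  have hsq : normSq z ≤ normSq w := by
    rw [← Complex.sq_norm, ← Complex.sq_norm]
    gcongr
  rw [normSq_apply, normSq_apply] at hsq
  simp only [normSq_apply, sub_re, sub_im, mul_re, conj_re, conj_im]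
  nlinarith

variable {n : Type*} [Fintype n]

lemma sum_mul_normSq_sub_le_of_forall_norm_le {w : n → ℝ} (hw : ∀ j, 0 ≤ w j) {v : n → ℂ}
    {p : n} (hp : ∀ j, ‖v j‖ ≤ ‖v p‖) {μ : ℂ} (h : ∑ j, (w j : ℂ) * (v p - v j) = μ * v p) :
    ∑ j, w j * normSq (v j - v p) ≤ 2 * μ.re * normSq (v p) :=
  calc ∑ j, w j * normSq (v j - v p)
      ≤ ∑ j, w j * (2 * (conj (v p) * (v p - v j)).re) := by
        gcongr with j
        exacts [hw j, normSq_sub_le_two_mul_re_conj_mul_sub (hp j)]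
    _ = 2 * (conj (v p) * ∑ j, (w j : ℂ) * (v p - v j)).re := by
        simp only [Finset.mul_sum, re_sum, mul_left_comm _ (w _ : ℂ), re_ofReal_mul]
        exact Finset.sum_congr rfl fun j _ => by ring
    _ = 2 * μ.re * normSq (v p) := by
        rw [h, mul_left_comm, conj_mul', ← ofReal_pow, re_mul_ofReal, ← normSq_eq_norm_sq]
        ring

variable [DecidableEq n]

def weightedLaplacian {R : Type*} [Ring R] (a : n → n → R) : Matrix n n R :=
  diagonal (fun i => ∑ k, a i k) - of a

lemma weightedLaplacian_mulVec {R : Type*} [Ring R] (a : n → n → R) (v : n → R) (i : n) :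
    (weightedLaplacian a *ᵥ v) i = ∑ j, a i j * (v i - v j) := by
  rw [weightedLaplacian, sub_mulVec, Pi.sub_apply, mulVec_diagonal, Finset.sum_mul]
  simp only [mul_sub, Finset.sum_sub_distrib, mulVec, dotProduct, of_apply]

lemma weightedLaplacian_map {R S : Type*} [Ring R] [Ring S] (f : R →+* S) (a : n → n → R) :
    (weightedLaplacian a).map f = weightedLaplacian fun i j => f (a i j) := by
  ext i j
  simp [weightedLaplacian, diagonal_apply, apply_ite f]

lemma expandedLaplacian_map_mulVec_apply (a : n → n → ℝ) (ι : n → ℝ) (v : n → ℂ) (i : n) :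
    ((weightedLaplacian a + diagonal ι).map ofReal *ᵥ v) i =
      ∑ j, (a i j : ℂ) * (v i - v j) + ι i * v i := by
  have hmap : (weightedLaplacian a).map ofReal = _ := weightedLaplacian_map ofRealHom a
  rw [Matrix.map_add _ ofReal_add, diagonal_map ofReal_zero, add_mulVec, Pi.add_apply,
    mulVec_diagonal, hmap, weightedLaplacian_mulVec]
  rfl

lemma Matrix.exists_mulVec_eq_smul_of_mem_spectrum {K : Type*} [Field K] {A : Matrix n n K}
    {μ : K} (h : μ ∈ spectrum K A) : ∃ v ≠ 0, A *ᵥ v = μ • v := by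
  rw [← spectrum_toLin', ← Module.End.hasEigenvalue_iff_mem_spectrum] at h
  obtain ⟨v, hv⟩ := h.exists_hasEigenvector
  exact ⟨v, hv.2, hv.apply_eq_smul⟩

lemma Matrix.isUnit_of_isUnit_map {K L : Type*} [Field K] [CommRing L] [Nontrivial L]
    (f : K →+* L) {M : Matrix n n K} (h : IsUnit (M.map f)) : IsUnit M := by
  rw [isUnit_iff_isUnit_det, isUnit_iff_ne_zero]
  rw [isUnit_iff_isUnit_det, ← RingHom.mapMatrix_apply, ← RingHom.map_det] at h
  exact fun hM => h.ne_zero (by rw [hM, map_zero])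

section Eigenvector

variable {a : n → n → ℝ} {ι : n → ℝ} {v : n → ℂ} {μ : ℂ}

lemma sum_mul_normSq_sub_le_of_mulVec_eq_smul (ha : ∀ i j, 0 ≤ a i j)
    (hv : (weightedLaplacian a + diagonal ι).map ofReal *ᵥ v = μ • v) {p : n}
    (hp : ∀ j, ‖v j‖ ≤ ‖v p‖) :
    ∑ j, a p j * normSq (v j - v p) ≤ 2 * (μ.re - ι p) * normSq (v p) := by
  have hrow : ∑ j, (a p j : ℂ) * (v p - v j) = (μ - ι p) * v p := by
    have := congrFun hv p
    rw [expandedLaplacian_map_mulVec_apply, Pi.smul_apply, smul_eq_mul] at this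
    linear_combination this
  simpa using sum_mul_normSq_sub_le_of_forall_norm_le (ha p) hp hrow

lemma le_re_of_mulVec_eq_smul (ha : ∀ i j, 0 ≤ a i j)
    (hv : (weightedLaplacian a + diagonal ι).map ofReal *ᵥ v = μ • v) {p : n}
    (hp : ∀ j, ‖v j‖ ≤ ‖v p‖) (hvp : v p ≠ 0) : ι p ≤ μ.re := by
  have hle := sum_mul_normSq_sub_le_of_mulVec_eq_smul ha hv hp
  have hsum : 0 ≤ ∑ j, a p j * normSq (v j - v p) :=
    Finset.sum_nonneg fun j _ => mul_nonneg (ha p j) (normSq_nonneg _)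
  nlinarith [normSq_pos.2 hvp]

lemma eq_of_mulVec_eq_smul_of_pos (ha : ∀ i j, 0 ≤ a i j) {p : n} (hι : 0 ≤ ι p)
    (hre : μ.re ≤ 0) (hv : (weightedLaplacian a + diagonal ι).map ofReal *ᵥ v = μ • v)
    (hp : ∀ j, ‖v j‖ ≤ ‖v p‖) {j : n} (hj : 0 < a p j) : v j = v p := by
  have hnonneg : ∀ k ∈ Finset.univ, 0 ≤ a p k * normSq (v k - v p) :=
    fun k _ => mul_nonneg (ha p k) (normSq_nonneg _)
  have hzero : ∑ k, a p k * normSq (v k - v p) = 0 := by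
    refine le_antisymm ?_ (Finset.sum_nonneg hnonneg)
    refine (sum_mul_normSq_sub_le_of_mulVec_eq_smul ha hv hp).trans ?_
    nlinarith [normSq_nonneg (v p)]
  have hj0 := (Finset.sum_eq_zero_iff_of_nonneg hnonneg).1 hzero j (Finset.mem_univ j)
  exact sub_eq_zero.1 (normSq_eq_zero.1 ((mul_eq_zero.1 hj0).resolve_left hj.ne'))

theorem re_pos_of_mulVec_eq_smul (ha : ∀ i j, 0 ≤ a i j) (hι : ∀ i, 0 ≤ ι i)
    (hreach : ∀ j, ∃ c, 0 < ι c ∧ Relation.ReflTransGen (fun p q => 0 < a q p) c j)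
    (hv0 : v ≠ 0) (hv : (weightedLaplacian a + diagonal ι).map ofReal *ᵥ v = μ • v) :
    0 < μ.re := by
  by_contra! hre
  obtain ⟨j₀, hj₀⟩ := Function.ne_iff.1 hv0
  have : Nonempty n := ⟨j₀⟩
  obtain ⟨p, hp⟩ := Finite.exists_max fun j => ‖v j‖
  have hconst : ∀ x, Relation.ReflTransGen (fun p q => 0 < a q p) x p → v x = v p := by
    intro x hx
    induction hx using Relation.ReflTransGen.head_induction_on with
    | refl => rfl
    | head hxy _ ih =>
      rw [← ih]
      exact eq_of_mulVec_eq_smul_of_pos ha (hι _) hre hv (ih ▸ hp) hxy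
  obtain ⟨c, hc, hcp⟩ := hreach p
  have hvp : v p ≠ 0 := norm_pos_iff.1 ((norm_pos_iff.2 hj₀).trans_le (hp j₀))
  have hvc := hconst c hcp
  linarith [le_re_of_mulVec_eq_smul ha hv (hvc ▸ hp) (hvc ▸ hvp)]

theorem re_pos_of_mem_spectrum (ha : ∀ i j, 0 ≤ a i j) (hι : ∀ i, 0 ≤ ι i)
    (hreach : ∀ j, ∃ c, 0 < ι c ∧ Relation.ReflTransGen (fun p q => 0 < a q p) c j)
    (hμ : μ ∈ spectrum ℂ ((weightedLaplacian a + diagonal ι).map ofReal)) : 0 < μ.re :=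
  let ⟨_, hv0, hv⟩ := exists_mulVec_eq_smul_of_mem_spectrum hμ
  re_pos_of_mulVec_eq_smul ha hι hreach hv0 hv

end Eigenvector

theorem expanded_laplacian_spectrum_pos_general {N : ℕ} (a : Fin N → Fin N → ℝ)
    (ha : ∀ i j, 0 ≤ a i j) (hdiag : ∀ i, a i i = 0)
    (L : Matrix (Fin N) (Fin N) ℝ)
    (hL : ∀ i j, L i j = if i = j then ∑ k, a i k else -(a i j))
    (iota : Fin N → ℝ) (hiota : ∀ i, iota i = 0 ∨ iota i = 1)
    -- every node is reachable by a directed path from the root set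
    -- (an edge from node p to node q exists when a q p > 0)
    (hreach : ∀ j : Fin N, ∃ c : Fin N, iota c = 1 ∧
      Relation.ReflTransGen (fun p q => 0 < a q p) c j) :
    (∀ lam ∈ spectrum ℂ ((L + Matrix.diagonal iota).map Complex.ofReal), 0 < lam.re)
      ∧ IsUnit (L + Matrix.diagonal iota) := by
  obtain rfl : L = weightedLaplacian a := by
    ext i j
    rw [hL]
    split_ifs with h <;> simp [weightedLaplacian, h, hdiag]
  have hspec : ∀ μ ∈ spectrum ℂ ((weightedLaplacian a + diagonal iota).map ofReal), 0 < μ.re :=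
    fun μ => re_pos_of_mem_spectrum ha (fun i => by rcases hiota i with h | h <;> simp [h])
      fun j => (hreach j).imp fun _ ⟨hc, hcj⟩ => ⟨hc ▸ one_pos, hcj⟩
  refine ⟨hspec, isUnit_of_isUnit_map ofRealHom ((spectrum.zero_notMem_iff ℂ).1 fun h0 => ?_)⟩
  simpa using hspec 0 h0

theorem expanded_laplacian_spectrum_pos {N : ℕ} (a : Fin N → Fin N → ℝ)
    (ha : ∀ i j, 0 ≤ a i j) (hdiag : ∀ i, a i i = 0)
    (L : Matrix (Fin N) (Fin N) ℝ)
    (hL : ∀ i j, L i j = if i = j then ∑ k, a i k else -(a i j))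
    (iota : Fin N → ℝ) (hiota : ∀ i, iota i = 0 ∨ iota i = 1)
    (hroot : ∃ i, iota i = 1)
    -- every node is reachable by a directed path from the root set
    -- (an edge from node p to node q exists when a q p > 0)
    (hreach : ∀ j : Fin N, ∃ c : Fin N, iota c = 1 ∧
      Relation.ReflTransGen (fun p q => 0 < a q p) c j) :
    (∀ lam ∈ spectrum ℂ ((L + Matrix.diagonal iota).map Complex.ofReal), 0 < lam.re)
      ∧ IsUnit (L + Matrix.diagonal iota) :=
  expanded_laplacian_spectrum_pos_general a ha hdiag L hL iota hiota hreach
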